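/- Let a be a vertex of G with no loop at a, and suppose that either (1) a lies on no 3-cycle of G (there are no distinct vertices u, w with E a u, E a w and E u w), or (2) a is a vertex of a leaf of G (an edge of G one of whose vertices has degree 1). Then for every nonempty subset L of the vertex set of N̄(a) and every λ ∈ Γ_{a,L}, the type II map φ^λ_{a,L} equals λ·δ*(∂/∂x_a); in particular, every type II map associated with a lies in the image of δ*. -/
import Mathlib


open MvPolynomial

noncomputable section

/-- The edge ideal of the (possibly non-simple) graph on `V` given by the
symmetric relation `E`: the ideal generated by the monomials `X a * X b`
over all pairs `(a, b)` with `E a b`. -/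
def edgeIdeal (k : Type*) [Field k] {V : Type*} (E : V → V → Prop) :
    Ideal (MvPolynomial V k) :=
  Ideal.span {m | ∃ a b, E a b ∧ m = X a * X b}

/-- The generator `X u * X v` of the edge ideal, as an element of the ideal. -/
def edgeGen (k : Type*) [Field k] {V : Type*} (E : V → V → Prop) (u v : V) (h : E u v) :
    edgeIdeal k E :=
  ⟨X u * X v, Ideal.subset_span ⟨u, v, h, rfl⟩⟩

/-- `φ : I → R/I` is a trivial first-order deformation: it lies in the image of `δ*`,
i.e. it is induced by a `k`-derivation of `R`. -/
def IsTrivialDef (k : Type*) [Field k] {V : Type*} (E : V → V → Prop)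
    (φ : edgeIdeal k E →ₗ[MvPolynomial V k] MvPolynomial V k ⧸ edgeIdeal k E) : Prop :=
  ∃ d : Derivation k (MvPolynomial V k) (MvPolynomial V k),
    ∀ f : edgeIdeal k E, φ f = Ideal.Quotient.mk (edgeIdeal k E) (d f)

/-- `R/I(G)` is rigid: `δ*` is surjective, i.e. `T¹(R/I) = 0`. -/
def RigidEdgeIdeal (k : Type*) [Field k] {V : Type*} (E : V → V → Prop) : Prop :=
  ∀ φ : edgeIdeal k E →ₗ[MvPolynomial V k] MvPolynomial V k ⧸ edgeIdeal k E,
    IsTrivialDef k E φ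

open scoped Classical in
/-- The neighborhood of a vertex. -/
def nbhd {V : Type*} [Fintype V] (E : V → V → Prop) (v : V) : Finset V :=
  Finset.univ.filter (fun w => E v w)

open scoped Classical in
/-- The set `Λ_{ab}` of squarefree monomials `√(∏_{g ∈ Λ} x_{c g})` over all choice
functions `c` with `c g ∈ Λ_g = N(g) \ {a,b}` for every `g ∈ Λ = (N(a)\{b}) ∪ (N(b)\{a})`. -/
def LambdaSet (k : Type*) [Field k] {V : Type*} [Fintype V] [DecidableEq V]
    (E : V → V → Prop) (a b : V) : Set (MvPolynomial V k) :=
  {m | ∃ c : V → V,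
    (∀ g ∈ (nbhd E a).erase b ∪ (nbhd E b).erase a, c g ∈ nbhd E g \ {a, b}) ∧
    m = ∏ v ∈ ((nbhd E a).erase b ∪ (nbhd E b).erase a).image c, X v}

/-- `φ` is the type I map `φ^λ_{ab}` : it sends the generator `x_a x_b` to `λ` and every
other minimal monomial generator of the edge ideal to `0`. -/
def IsTypeI (k : Type*) [Field k] {V : Type*} (E : V → V → Prop) (a b : V) (hab : E a b)
    (lam : MvPolynomial V k)
    (φ : edgeIdeal k E →ₗ[MvPolynomial V k] MvPolynomial V k ⧸ edgeIdeal k E) : Prop :=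
  φ (edgeGen k E a b hab) = Ideal.Quotient.mk (edgeIdeal k E) lam ∧
  ∀ u v (h : E u v), X u * X v ≠ (X a * X b : MvPolynomial V k) →
    φ (edgeGen k E u v h) = 0

open scoped Classical in
/-- `Γ(L)`: the vertices of `N̄(a)` not in `L` that are adjacent in `N̄(a)`
(the complement of the underlying simple graph induced on `N(a)`) to some vertex of `L`. -/
def GammaF {V : Type*} [Fintype V] [DecidableEq V] (E : V → V → Prop) (a : V)
    (L : Finset V) : Finset V :=
  (nbhd E a \ L).filter (fun g => ∃ u ∈ L, u ≠ g ∧ ¬ E u g)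

open scoped Classical in
/-- The set `Γ_{a,L}` of squarefree monomials `√(∏_{g ∈ Γ(L)} x_{c g})` over all choice
functions `c` with `c g ∈ Γ_g = N(g) \ {a}`. -/
def GammaSet (k : Type*) [Field k] {V : Type*} [Fintype V] [DecidableEq V]
    (E : V → V → Prop) (a : V) (L : Finset V) : Set (MvPolynomial V k) :=
  {m | ∃ c : V → V,
    (∀ g ∈ GammaF E a L, c g ∈ (nbhd E g).erase a) ∧
    m = ∏ v ∈ (GammaF E a L).image c, X v}

/-- `φ` is the type II map `φ^λ_{a,L}` : it sends the generator `x_a x_u` to `λ·x_u`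
for `u ∈ L` and every other minimal monomial generator of the edge ideal to `0`. -/
def IsTypeII (k : Type*) [Field k] {V : Type*} (E : V → V → Prop) (a : V) (L : Finset V)
    (lam : MvPolynomial V k)
    (φ : edgeIdeal k E →ₗ[MvPolynomial V k] MvPolynomial V k ⧸ edgeIdeal k E) : Prop :=
  (∀ u ∈ L, ∀ h : E a u, φ (edgeGen k E a u h) =
      Ideal.Quotient.mk (edgeIdeal k E) (lam * X u)) ∧
  ∀ u v (h : E u v), (∀ x ∈ L, X u * X v ≠ (X a * X x : MvPolynomial V k)) →
    φ (edgeGen k E u v h) = 0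

/-- Let `a` be a vertex with no loop at `a` such that either (1) `a` lies
on no 3-cycle of `G`, or (2) `a` is a vertex of a leaf of `G`.  Then every type II map
associated with `a` equals `λ·δ*(∂/∂x_a)`; in particular it lies in the image of `δ*`. -/

lemma X_mul_X_eq_cases {k : Type*} [Field k] {V : Type*} {u v a x : V}
    (h : (X u * X v : MvPolynomial V k) = X a * X x) :
    (u = a ∧ v = x) ∨ (u = x ∧ v = a) := by
  classical
  rw [X, X, X, X, monomial_mul, monomial_mul, monomial_eq_monomial_iff] at h
  rcases h with ⟨h, -⟩ | ⟨h, -⟩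
  · by_cases hu : u = a
    · subst hu
      exact Or.inl ⟨rfl, (Finsupp.single_left_inj one_ne_zero).1 (add_left_cancel h)⟩
    · by_cases hv : v = a
      · rw [hv, add_comm] at h
        exact Or.inr ⟨(Finsupp.single_left_inj one_ne_zero).1 (add_left_cancel h), hv⟩
      · exfalso
        have := DFunLike.congr_fun h a
        simp [Finsupp.single_apply, hu, hv] at this
        split_ifs at this <;> omega
  · exact absurd h (by norm_num)

lemma mem_nbhd_iff {V : Type*} [Fintype V] (E : V → V → Prop) {v w : V} :
    w ∈ nbhd E v ↔ E v w := by
  classical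
  simp [nbhd]

/-- Key lemma: for `v ∈ N(a) \ L`, we have `lam * X v ∈ I`. -/
lemma gammaSet_mul_X_mem {k : Type*} [Field k] {V : Type*} [Fintype V] [DecidableEq V]
    (E : V → V → Prop) (hsymm : Symmetric E)
    (a : V) (hnoloop : ¬ E a a)
    (hcase : (¬ ∃ u w, u ≠ w ∧ E a u ∧ E a w ∧ E u w) ∨
      (∃ w, E a w ∧ ((nbhd E a).card = 1 ∨ (nbhd E w).card = 1)))
    (L : Finset V) (hLne : L.Nonempty) (hLsub : L ⊆ nbhd E a)
    {lam : MvPolynomial V k} (hlam : lam ∈ GammaSet k E a L)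
    {v : V} (hav : E a v) (hvL : v ∉ L) :
    lam * X v ∈ edgeIdeal k E := by
  classical
  obtain ⟨c, hc, rfl⟩ := hlam
  by_cases hvG : v ∈ GammaF E a L
  · -- `c v` is a neighbor of `v`, and `X (c v)` divides `lam`.
    have hcv : c v ∈ ((GammaF E a L).image c) := Finset.mem_image_of_mem c hvG
    have hcvn : c v ∈ (nbhd E v).erase a := hc v hvG
    have hEv : E v (c v) := (mem_nbhd_iff E).1 (Finset.mem_of_mem_erase hcvn)
    have hprod : (∏ w ∈ (GammaF E a L).image c, X w : MvPolynomial V k)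
        = X (c v) * ∏ w ∈ ((GammaF E a L).image c).erase (c v), X w :=
      (Finset.mul_prod_erase _ _ hcv).symm
    rw [hprod]
    have hgen : (X v * X (c v) : MvPolynomial V k) ∈ edgeIdeal k E :=
      Ideal.subset_span ⟨v, c v, hEv, rfl⟩
    have : (X (c v) * ∏ w ∈ ((GammaF E a L).image c).erase (c v), X w) * X v
        = ((∏ w ∈ ((GammaF E a L).image c).erase (c v), X w) * (X v * X (c v))
          : MvPolynomial V k) := by
      ring
    rw [this]
    exact Ideal.mul_mem_left _ _ hgen
  · -- `v ∉ Γ(L)`: every `u ∈ L` is adjacent to `v`.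
    exfalso
    have hvmem : v ∈ nbhd E a \ L := by
      simp [mem_nbhd_iff, hav, hvL, nbhd]
    have hall : ∀ u ∈ L, E u v := by
      intro u huL
      by_contra hEuv
      exact hvG (Finset.mem_filter.2 ⟨hvmem, ⟨u, huL, fun h => hvL (h ▸ huL), hEuv⟩⟩)
    obtain ⟨u, huL⟩ := hLne
    have hEau : E a u := (mem_nbhd_iff E).1 (hLsub huL)
    have huv : u ≠ v := fun h => hvL (h ▸ huL)
    rcases hcase with htri | ⟨w, haw, hdeg⟩
    · exact htri ⟨u, v, huv, hEau, hav, hall u huL⟩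
    · rcases hdeg with hda | hdw
      · -- deg a = 1, but u ≠ v are both neighbors of a
        have hu' : u ∈ nbhd E a := (mem_nbhd_iff E).2 hEau
        have hv' : v ∈ nbhd E a := (mem_nbhd_iff E).2 hav
        have : 1 < (nbhd E a).card := Finset.one_lt_card.2 ⟨u, hu', v, hv', huv⟩
        omega
      · -- deg w = 1, so N(w) = {a}
        have hawm : a ∈ nbhd E w := (mem_nbhd_iff E).2 (hsymm haw)
        obtain ⟨z, hz⟩ := Finset.card_eq_one.1 hdw
        have hza : z = a := by
          have := hawm; rw [hz] at this
          have := Finset.mem_singleton.1 this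
          exact this.symm
        have hnw : nbhd E w = {a} := by rw [hz, hza]
        by_cases hwL : w ∈ L
        · have hEwv : E w v := hall w hwL
          have : v ∈ nbhd E w := (mem_nbhd_iff E).2 hEwv
          rw [hnw] at this
          have hva : v = a := by simpa using this
          exact hnoloop (hva ▸ hav)
        · -- w ∈ Γ(L), but Γ_w = N(w) \ {a} = ∅
          have hua : u ≠ a := fun h => hnoloop (h ▸ hEau)
          have hnEuw : ¬ E u w := by
            intro hEuw
            have : u ∈ nbhd E w := (mem_nbhd_iff E).2 (hsymm hEuw)
            rw [hnw] at this
            exact hua (by simpa using this)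
          have huw : u ≠ w := fun h => hwL (h ▸ huL)
          have hwG : w ∈ GammaF E a L := by
            refine Finset.mem_filter.2 ⟨?_, ⟨u, huL, huw, hnEuw⟩⟩
            simp [nbhd, haw, hwL]
          have := hc w hwG
          rw [hnw] at this
          simp at this

theorem statement8 {k : Type*} [Field k] {V : Type*} [Fintype V] [DecidableEq V]
    (E : V → V → Prop) (hsymm : Symmetric E)
    (a : V) (hnoloop : ¬ E a a)
    (hcase : (¬ ∃ u w, u ≠ w ∧ E a u ∧ E a w ∧ E u w) ∨
      (∃ w, E a w ∧ ((nbhd E a).card = 1 ∨ (nbhd E w).card = 1))) :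
    ∀ L : Finset V, L.Nonempty → L ⊆ nbhd E a →
    ∀ lam ∈ GammaSet k E a L,
    ∀ φ : edgeIdeal k E →ₗ[MvPolynomial V k] MvPolynomial V k ⧸ edgeIdeal k E,
      IsTypeII k E a L lam φ →
      ∀ f : edgeIdeal k E,
        φ f = Ideal.Quotient.mk (edgeIdeal k E) (lam * pderiv a (f : MvPolynomial V k)) := by
  classical
  intro L hLne hLsub lam hlam φ hφ f
  obtain ⟨x, hx⟩ := f
  refine Submodule.span_induction
    (p := fun x hx => φ ⟨x, hx⟩ =
      Ideal.Quotient.mk (edgeIdeal k E) (lam * pderiv a x)) ?_ ?_ ?_ ?_ hx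
  · -- generators
    rintro m ⟨u, v, hEuv, rfl⟩
    by_cases hex : ∃ x ∈ L, (X u * X v : MvPolynomial V k) = X a * X x
    · obtain ⟨y, hyL, heq⟩ := hex
      have hEay : E a y := (mem_nbhd_iff E).1 (hLsub hyL)
      have hya : y ≠ a := fun h => hnoloop (h ▸ hEay)
      have hsub : (⟨X u * X v, Ideal.subset_span ⟨u, v, hEuv, rfl⟩⟩ : edgeIdeal k E)
          = edgeGen k E a y hEay := Subtype.ext heq
      rw [hsub, hφ.1 y hyL hEay, heq]
      congr 1
      rw [Derivation.leibniz, pderiv_X_self, pderiv_X_of_ne hya]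
      simp
    · push_neg at hex
      have h0 : φ ⟨X u * X v, Ideal.subset_span ⟨u, v, hEuv, rfl⟩⟩ = 0 := by
        have := hφ.2 u v hEuv hex
        rw [← this]
        rfl
      rw [h0]
      symm
      rw [Ideal.Quotient.eq_zero_iff_mem]
      by_cases hu : u = a
      · have hEav : E a v := by rw [hu] at hEuv; exact hEuv
        have hva : v ≠ a := fun h => hnoloop (by rw [h] at hEav; exact hEav)
        have hvL : v ∉ L := by
          intro hvL
          exact hex v hvL (by rw [hu])
        have hpd : pderiv a (X a * X v : MvPolynomial V k) = X v := by
          rw [Derivation.leibniz, pderiv_X_self, pderiv_X_of_ne hva]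
          simp
        rw [hu, hpd]
        exact gammaSet_mul_X_mem E hsymm a hnoloop hcase L hLne hLsub hlam hEav hvL
      · by_cases hv : v = a
        · have hEau : E a u := hsymm (by rw [hv] at hEuv; exact hEuv)
          have huL : u ∉ L := by
            intro huL
            exact hex u huL (by rw [hv]; ring)
          have hpd : pderiv a (X u * X a : MvPolynomial V k) = X u := by
            rw [Derivation.leibniz, pderiv_X_self, pderiv_X_of_ne hu]
            simp
          rw [hv, hpd]
          exact gammaSet_mul_X_mem E hsymm a hnoloop hcase L hLne hLsub hlam hEau huL
        · have hpd : pderiv a (X u * X v : MvPolynomial V k) = 0 := by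
            rw [Derivation.leibniz, pderiv_X_of_ne hu, pderiv_X_of_ne hv]
            simp
          rw [hpd, mul_zero]
          exact Ideal.zero_mem _
  · -- zero
    show φ 0 = Ideal.Quotient.mk (edgeIdeal k E) (lam * pderiv a 0)
    simp
  · -- add
    intro x y hx hy ihx ihy
    show φ (⟨x, hx⟩ + ⟨y, hy⟩)
        = Ideal.Quotient.mk (edgeIdeal k E) (lam * pderiv a (x + y))
    rw [map_add, ihx, ihy, map_add (pderiv a) x y, mul_add]
    exact (map_add (Ideal.Quotient.mk (edgeIdeal k E)) _ _).symm
  · -- smul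
    intro r x hx ih
    show φ (r • ⟨x, hx⟩)
        = Ideal.Quotient.mk (edgeIdeal k E) (lam * pderiv a (r • x))
    rw [map_smul, ih]
    have h2 : r • Ideal.Quotient.mk (edgeIdeal k E) (lam * pderiv a x)
        = Ideal.Quotient.mk (edgeIdeal k E) (r * (lam * pderiv a x)) := by
      rw [← smul_eq_mul]
      exact (Submodule.Quotient.mk_smul (edgeIdeal k E) r (lam * pderiv a x)).symm
    rw [h2]
    rw [Ideal.Quotient.eq]
    have hlz : lam * pderiv a (r • x)
        = r * (lam * pderiv a x) + lam * (x * pderiv a r) := by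
      rw [smul_eq_mul, Derivation.leibniz]
      simp only [smul_eq_mul]
      ring
    rw [hlz]
    have : r * (lam * pderiv a x) - (r * (lam * pderiv a x) + lam * (x * pderiv a r))
        = -(lam * pderiv a r) * x := by ring
    rw [this]
    exact Ideal.mul_mem_left _ _ hx


end
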